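/- For each μ > 0, the bilinear bracket on the 4-dimensional real vector space with basis r₀, r₁, r₂, A determined by [r₀,r₁] = 0, [r₀,r₂] = r₁, [r₁,r₂] = 2r₁, [r₀,A] = r₂, [r₁,A] = 2r₂, [r₂,A] = −r₀ − (2/μ)r₁ + 2A satisfies the Jacobi identity (hence defines a Lie algebra, the isometry Lie algebra of (G₀, g_{μ,1})), and the matrix of its Killing form B(X,Y) = tr(ad_X ∘ ad_Y) in this basis has eigenvalues −(μ + 4 + √(81μ² + 8μ + 16))/μ, −(μ + 4 − √(81μ² + 8μ + 16))/μ, 0, and 8. -/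

import Mathlib

/-! The Jacobi identity and the Killing matrix are direct computations. In the basis
`r₀, r₁, r₂, A` the Killing matrix has `r₂` as an eigenvector with eigenvalue `8`, and the
remaining `3 × 3` block has characteristic polynomial `X (X² + (2 + 8/μ) X - 80)`. The two
stated roots have sum `-(2 + 8/μ)` and product `-80` (since `(μ + 4)² - (81μ² + 8μ + 16) = -80μ²`),
so by Vieta they are the roots of the quadratic factor. -/

noncomputable section

open scoped BigOperators
open Polynomial

/-- The underlying space of the 4-dimensional isometry Lie algebra. -/
abbrev V4 : Type := Fin 4 → ℝ

/-- The standard basis `r₀, r₁, r₂, A` of the isometry Lie algebra. -/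
def e4 (i : Fin 4) : V4 := Pi.single i 1

/-- The bilinear bracket on `ℝ⁴` (basis `r₀,r₁,r₂,A`) determined by
`[r₀,r₁] = 0`, `[r₀,r₂] = r₁`, `[r₁,r₂] = 2r₁`, `[r₀,A] = r₂`, `[r₁,A] = 2r₂`,
`[r₂,A] = −r₀ − (2/μ) r₁ + 2A`. -/
def bra4 (μ : ℝ) (x y : V4) : V4 :=
  ![-(x 2 * y 3 - x 3 * y 2),
    (x 0 * y 2 - x 2 * y 0) + 2 * (x 1 * y 2 - x 2 * y 1)
      - (2/μ) * (x 2 * y 3 - x 3 * y 2),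
    (x 0 * y 3 - x 3 * y 0) + 2 * (x 1 * y 3 - x 3 * y 1),
    2 * (x 2 * y 3 - x 3 * y 2)]

/-- The matrix (in the basis `r₀,r₁,r₂,A`) of the Killing form
`B(X,Y) = tr(ad_X ∘ ad_Y)`. -/
def killing (μ : ℝ) : Matrix (Fin 4) (Fin 4) ℝ :=
  Matrix.of fun i j => ∑ k : Fin 4, bra4 μ (e4 i) (bra4 μ (e4 j) (e4 k)) k

theorem bra4_jacobi (μ : ℝ) (x y z : V4) :
    bra4 μ x (bra4 μ y z) + bra4 μ y (bra4 μ z x) + bra4 μ z (bra4 μ x y) = 0 := by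
  funext i
  fin_cases i <;> simp [bra4] <;> ring

theorem killing_eq (μ : ℝ) :
    killing μ = !![0, 0, 0, -4; 0, 0, 0, -8; 0, 0, 8, 0; -4, -8, 0, -(2 + 8 / μ)] := by
  ext i j
  fin_cases i <;> fin_cases j <;>
    simp [killing, bra4, e4, Fin.sum_univ_four, Pi.single_apply] <;> ring

theorem charpoly_arrowhead {R : Type*} [CommRing R] (a b c d : R) :
    (!![0, 0, 0, a; 0, 0, 0, b; 0, 0, c, 0; a, b, 0, d] : Matrix (Fin 4) (Fin 4) R).charpoly
      = (X ^ 2 - C d * X - C (a ^ 2 + b ^ 2)) * X * (X - C c) := by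
  simp [Matrix.charpoly, Matrix.det_succ_row_zero, Fin.sum_univ_succ, Fin.succAbove]
  ring

theorem X_sub_C_mul_X_sub_C {R : Type*} [CommRing R] (a b : R) :
    (X - C a) * (X - C b) = X ^ 2 - C (a + b) * X + C (a * b) := by
  simp only [C_add, C_mul]
  ring

/-- the given bracket satisfies the Jacobi identity (hence defines a Lie
algebra, the isometry Lie algebra of `(G₀, g_{μ,1})`), and its Killing form has
eigenvalues `−(μ+4±√(81μ²+8μ+16))/μ`, `0` and `8`. -/
theorem stmt6 (μ : ℝ) (hμ : 0 < μ) :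
    (∀ x y z : V4,
      bra4 μ x (bra4 μ y z) + bra4 μ y (bra4 μ z x) + bra4 μ z (bra4 μ x y) = 0) ∧
    (killing μ).charpoly =
      (X - C (-((μ + 4 + Real.sqrt (81*μ^2 + 8*μ + 16)) / μ))) *
      (X - C (-((μ + 4 - Real.sqrt (81*μ^2 + 8*μ + 16)) / μ))) *
      X * (X - C 8) := by
  refine ⟨bra4_jacobi μ, ?_⟩
  set s := Real.sqrt (81*μ^2 + 8*μ + 16)
  have hs : s ^ 2 = 81*μ^2 + 8*μ + 16 := Real.sq_sqrt (by positivity)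
  have hsum : -((μ + 4 + s) / μ) + -((μ + 4 - s) / μ) = -(2 + 8 / μ) := by
    field_simp
    ring
  have hprod : -((μ + 4 + s) / μ) * -((μ + 4 - s) / μ) = -80 := by
    field_simp
    linear_combination (-1 : ℝ) * hs
  rw [killing_eq, charpoly_arrowhead, X_sub_C_mul_X_sub_C, hsum, hprod]
  norm_num [sub_eq_add_neg]
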